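/- arXiv:0909.0057 — 3 statements merged into one kernel-verified Lean document; each statement's English description precedes it below -/
import Mathlib

section
/- Let σ be a rational polyhedral cone in N_ℝ where N is a lattice of rank n, and let σ^∨ ⊆ M_ℝ be its dual cone, where M = N^∨. Then the monoid σ^∨ ∩ M is finitely generated (Gordan's lemma). -/
/-!
The dual cone of the cone spanned by `s` is cut out by the inequalities `⟨m, g⟩ ≥ 0`, `g ∈ s`,
so its lattice points are `{m ∈ ℤⁿ | f m ≥ 0}` for the linear map `f m = (⟨m, g⟩)_{g ∈ s}`.
Writing `m = p - q` with `p, q ∈ ℕⁿ` and recording the slack `t = f m ∈ ℕ^s`, this monoid is the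
image under `(p, q, t) ↦ p - q` of the equalizer of `(p, q, t) ↦ t` and `(p, q, t) ↦ f (p - q)`,
a submonoid of `ℕⁿ × ℕⁿ × ℕ^s` closed under subtraction and hence finitely generated by
Dickson's lemma.
-/

open Matrix

theorem AddSubmonoid.fg_comap_nonneg {ι κ : Type*} [Finite ι] [Finite κ]
    (f : (ι → ℤ) →+ (κ → ℤ)) : ((AddSubmonoid.nonneg (κ → ℤ)).comap f).FG := by
  let castι := AddMonoidHom.compLeft (Nat.castAddMonoidHom ℤ) ι
  let castκ := AddMonoidHom.compLeft (Nat.castAddMonoidHom ℤ) κ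
  let snd := AddMonoidHom.snd (ι → ℕ) ((ι → ℕ) × (κ → ℕ))
  let diff := castι.comp (AddMonoidHom.fst _ _) - castι.comp ((AddMonoidHom.fst _ _).comp snd)
  let slack := castκ.comp ((AddMonoidHom.snd _ _).comp snd)
  suffices h : (AddSubmonoid.nonneg (κ → ℤ)).comap f = (slack.eqLocusM (f.comp diff)).map diff by
    rw [h]
    exact (AddSubmonoid.fg_eqLocusM _ _).map diff
  ext m
  rw [AddSubmonoid.mem_comap, AddSubmonoid.mem_nonneg, AddSubmonoid.mem_map]
  constructor
  · intro hm
    let x := (fun i => (m i).toNat, fun i => (-m i).toNat, fun k => (f m k).toNat)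
    have hx : diff x = m := funext fun i => Int.toNat_sub_toNat_neg (m i)
    refine ⟨x, ?_, hx⟩
    show slack x = f (diff x)
    rw [hx]
    exact funext fun k => Int.toNat_of_nonneg (hm k)
  · rintro ⟨x, hx, rfl⟩
    rw [← AddMonoidHom.comp_apply, ← AddMonoidHom.mem_eqLocusM.mp hx]
    exact fun k => Int.natCast_nonneg _

theorem dotProduct_sum_smul_nonneg_iff {𝕜 α ι : Type*} [CommSemiring 𝕜] [PartialOrder 𝕜]
    [IsOrderedRing 𝕜] [Fintype ι] (w : ι → 𝕜) (s : Finset α) (v : α → ι → 𝕜) :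
    (∀ c : α → 𝕜, (∀ a, 0 ≤ c a) → 0 ≤ w ⬝ᵥ ∑ a ∈ s, c a • v a) ↔ ∀ a ∈ s, 0 ≤ w ⬝ᵥ v a := by
  classical
  refine ⟨fun h a ha => ?_, fun h c hc => ?_⟩
  · simpa [Pi.single_apply, ha] using h (Pi.single a 1) (Pi.single_nonneg.mpr zero_le_one)
  · rw [dotProduct_sum]
    exact Finset.sum_nonneg fun a ha => by
      rw [dotProduct_smul, smul_eq_mul]; exact mul_nonneg (hc a) (h a ha)

/-- Gordan's lemma: if `σ ⊆ N_ℝ = ℝⁿ` is a rational polyhedral cone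
(the set of nonnegative combinations of a finite set `s` of lattice points), then the
monoid `σ^∨ ∩ M` of lattice points of the dual cone is a finitely generated monoid,
i.e. it is the closure of a finite set. -/
theorem gordan (n : ℕ) (s : Finset (Fin n → ℤ)) (σ : Set (Fin n → ℝ))
    (hσ : σ = {x | ∃ c : (Fin n → ℤ) → ℝ, (∀ g, 0 ≤ c g) ∧
      x = ∑ g ∈ s, c g • (fun i => (g i : ℝ))}) :
    ∃ S : Finset (Fin n → ℤ), ∀ m : Fin n → ℤ,
      (∀ v ∈ σ, 0 ≤ ∑ i, (m i : ℝ) * v i) ↔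
        m ∈ AddSubmonoid.closure (S : Set (Fin n → ℤ)) := by
  let pairing : (Fin n → ℤ) →+ (s → ℤ) :=
    AddMonoidHom.mk' (fun m g => m ⬝ᵥ g) fun a b => funext fun g => add_dotProduct a b g
  obtain ⟨S, hS⟩ := AddSubmonoid.fg_comap_nonneg pairing
  refine ⟨S, fun m => ?_⟩
  calc (∀ v ∈ σ, 0 ≤ ∑ i, (m i : ℝ) * v i)
      ↔ ∀ c : (Fin n → ℤ) → ℝ, (∀ g, 0 ≤ c g) →
          0 ≤ ((↑) ∘ m) ⬝ᵥ ∑ g ∈ s, c g • ((↑) ∘ g : Fin n → ℝ) := by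
        rw [hσ]
        exact ⟨fun h c hc => h _ ⟨c, hc, rfl⟩, fun h _ ⟨c, hc, hv⟩ => hv ▸ h c hc⟩
    _ ↔ ∀ g ∈ s, 0 ≤ ((↑) ∘ m) ⬝ᵥ ((↑) ∘ g : Fin n → ℝ) := dotProduct_sum_smul_nonneg_iff ..
    _ ↔ ∀ g ∈ s, 0 ≤ m ⬝ᵥ g := by
        refine forall₂_congr fun g _ => ?_
        rw [← Int.cast_nonneg_iff (R := ℝ), ← eq_intCast (Int.castRingHom ℝ),
          RingHom.map_dotProduct]
        rfl
    _ ↔ m ∈ AddSubmonoid.closure (S : Set (Fin n → ℤ)) := by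
        rw [hS, AddSubmonoid.mem_comap, AddSubmonoid.mem_nonneg, Pi.le_def, Subtype.forall]
        rfl
end

section
/- Let Σ be a rational fan in N_ℝ and σ ∈ Σ a cone. Choose for each cone τ a point v_τ ∈ N in the relative interior of τ. If σ₀ < σ₁ < ⋯ < σ_p is a strictly increasing chain of cones in Σ (each a proper face of the next), then the images π_{σ₀}(v_{σ₁}), …, π_{σ₀}(v_{σ_p}) under the quotient map π_{σ₀} : N_ℝ → N_ℝ/span(σ₀) are linearly independent; equivalently they span a p-dimensional simplicial cone in N(σ₀)_ℝ. -/
/-- A face of a convex cone/set: a convex subset such that whenever a point of an open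
segment between two points of `σ` lies in `τ`, both endpoints lie in `τ`. -/
def IsFaceOf {E : Type*} [AddCommGroup E] [Module ℝ E] (τ σ : Set E) : Prop :=
  τ ⊆ σ ∧ Convex ℝ τ ∧
    ∀ x ∈ σ, ∀ y ∈ σ, ∀ t : ℝ, 0 < t → t < 1 →
      t • x + (1 - t) • y ∈ τ → x ∈ τ ∧ y ∈ τ

/-- A rational polyhedral cone in `ℝⁿ`: nonnegative combinations of finitely many
lattice points. -/
def IsRatCone {n : ℕ} (σ : Set (Fin n → ℝ)) : Prop :=
  ∃ s : Finset (Fin n → ℤ), σ = {x | ∃ c : (Fin n → ℤ) → ℝ, (∀ g, 0 ≤ c g) ∧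
    x = ∑ g ∈ s, c g • (fun i => (g i : ℝ))}

/-!
The vector `v_{σ_{i+1}}` does not lie in `span σ_i`: a face `τ` of a cone `σ` satisfies
`σ ∩ span τ = τ`, and a face containing a relative interior point of `σ` is all of `σ`.
So the images of `v_{σ_1}, …, v_{σ_p}` in `N_ℝ / span σ_0` are adapted to the strictly increasing
flag `span σ_i / span σ_0`, each leaving the previous step, and are therefore independent.
-/

open Submodule Topology

def IsRatCone.toPointedCone {n : ℕ} {σ : Set (Fin n → ℝ)} (h : IsRatCone σ) :
    PointedCone ℝ (Fin n → ℝ) where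
  carrier := σ
  zero_mem' := by
    obtain ⟨s, rfl⟩ := h
    exact ⟨0, fun _ => le_rfl, by simp⟩
  add_mem' := by
    obtain ⟨s, rfl⟩ := h
    rintro _ _ ⟨c, hc, rfl⟩ ⟨d, hd, rfl⟩
    exact ⟨c + d, fun g => add_nonneg (hc g) (hd g), by simp [add_smul, Finset.sum_add_distrib]⟩
  smul_mem' := by
    obtain ⟨s, rfl⟩ := h
    rintro t _ ⟨c, hc, rfl⟩
    exact ⟨fun g => t * c g, fun g => mul_nonneg t.2 (hc g),
      by simp [Finset.smul_sum, mul_smul]⟩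

theorem IsFaceOf.pointedCone_isFaceOf {E : Type*} [AddCommGroup E] [Module ℝ E]
    {F C : PointedCone ℝ E} (h : IsFaceOf (F : Set E) C) : F.IsFaceOf C := by
  refine .of_mem_of_add_mem_left h.1 fun {x y} hx hy hxy => ?_
  have hmid : (1 / 2 : ℝ) • x + (1 - 1 / 2 : ℝ) • y = (1 / 2 : ℝ) • (x + y) := by module
  exact (h.2.2 x hx y hy (1 / 2) (by norm_num) (by norm_num)
    (hmid ▸ F.smul_mem (by norm_num) hxy)).1

namespace PointedCone

theorem exists_add_mem_of_mem_span {R M : Type*} [Ring R] [LinearOrder R] [IsOrderedRing R]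
    [AddCommGroup M] [Module R M] {C : PointedCone R M} {x : M}
    (hx : x ∈ span R (C : Set M)) : ∃ b ∈ C, x + b ∈ C := by
  induction hx using Submodule.span_induction with
  | mem x hx => exact ⟨0, C.zero_mem, by simpa using hx⟩
  | zero => exact ⟨0, C.zero_mem, by simp⟩
  | add x y _ _ hx hy =>
    obtain ⟨b, hb, hxb⟩ := hx
    obtain ⟨b', hb', hyb'⟩ := hy
    exact ⟨b + b', C.add_mem hb hb', by simpa [add_add_add_comm] using C.add_mem hxb hyb'⟩
  | smul t x _ hx =>
    obtain ⟨b, hb, hxb⟩ := hx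
    rcases le_or_gt 0 t with ht | ht
    · exact ⟨t • b, C.smul_mem ht hb, by simpa [smul_add] using C.smul_mem ht hxb⟩
    · -- `t • x + (-t) • (x + b) = (-t) • b`
      refine ⟨(-t) • (x + b), C.smul_mem (neg_nonneg.2 ht.le) hxb, ?_⟩
      convert C.smul_mem (neg_nonneg.2 ht.le) hb using 1
      rw [smul_add, ← add_assoc, neg_smul, neg_smul, add_neg_cancel, zero_add]

namespace IsFaceOf

theorem mem_of_mem_span {R M : Type*} [Ring R] [LinearOrder R] [IsOrderedRing R]
    [AddCommGroup M] [Module R M] {F C : PointedCone R M} (hF : F.IsFaceOf C) {x : M}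
    (hx : x ∈ C) (hxF : x ∈ span R (F : Set M)) : x ∈ F := by
  obtain ⟨b, hb, hxb⟩ := exists_add_mem_of_mem_span hxF
  exact hF.mem_of_add_mem_left hx (hF.le hb) hxb

end IsFaceOf

end PointedCone

theorem exists_add_smul_sub_mem_of_mem_intrinsicInterior {E : Type*} [AddCommGroup E]
    [Module ℝ E] [TopologicalSpace E] [ContinuousAdd E] [ContinuousSMul ℝ E] {s : Set E}
    {x y : E} (hx : x ∈ intrinsicInterior ℝ s) (hy : y ∈ s) :
    ∃ ε : ℝ, 0 < ε ∧ x + ε • (x - y) ∈ s := by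
  obtain ⟨x, hx', rfl⟩ := mem_intrinsicInterior.mp hx
  have hline (t : ℝ) : (x : E) + t • ((x : E) - y) ∈ affineSpan ℝ s := by
    simpa [vsub_eq_sub, vadd_eq_add, add_comm] using AffineSubspace.smul_vsub_vadd_mem _ t
      x.2 (subset_affineSpan ℝ s hy) x.2
  let f : ℝ → affineSpan ℝ s := fun t => ⟨_, hline t⟩
  have hf : Continuous f := by fun_prop
  have hf0 : f 0 = x := by ext; simp [f]
  have hnear : ∀ᶠ t in 𝓝[>] (0 : ℝ), f t ∈ interior ((↑) ⁻¹' s) :=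
    nhdsWithin_le_nhds (hf.continuousAt.preimage_mem_nhds (hf0 ▸ isOpen_interior.mem_nhds hx'))
  obtain ⟨ε, hε, hεpos⟩ := (hnear.and self_mem_nhdsWithin).exists
  exact ⟨ε, hεpos, interior_subset (s := ((↑) ⁻¹' s : Set (affineSpan ℝ s))) hε⟩

namespace PointedCone.IsFaceOf

theorem eq_of_mem_intrinsicInterior {E : Type*} [AddCommGroup E] [Module ℝ E]
    [TopologicalSpace E] [ContinuousAdd E] [ContinuousSMul ℝ E] {F C : PointedCone ℝ E}
    (hF : F.IsFaceOf C) {x : E} (hxC : x ∈ intrinsicInterior ℝ (C : Set E)) (hxF : x ∈ F) :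
    F = C := by
  refine le_antisymm hF.le fun y hy => ?_
  obtain ⟨ε, hε, hz⟩ := exists_add_smul_sub_mem_of_mem_intrinsicInterior hxC hy
  have hcomb : (1 : ℝ) • (x + ε • (x - y)) + ε • y = (1 + ε) • x := by module
  refine hF.mem_of_smul_add_smul_mem_right hz hy one_pos hε ?_
  rw [hcomb]
  exact F.smul_mem (by positivity) hxF

end PointedCone.IsFaceOf

section Flag

variable {K V : Type*} [DivisionRing K] [AddCommGroup V] [Module K V]

theorem linearIndependent_of_mem_succ_of_notMem_castSucc {p : ℕ}
    {F : Fin (p + 1) → Submodule K V} (hF : Monotone F) {x : Fin p → V}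
    (hmem : ∀ i, x i ∈ F i.succ) (hnotMem : ∀ i, x i ∉ F i.castSucc) :
    LinearIndependent K x := by
  induction p with
  | zero => exact linearIndependent_empty_type
  | succ p ih =>
    rw [← Fin.snoc_init_self x]
    have hmem' (i : Fin p) : x i.castSucc ∈ F i.succ.castSucc := Fin.succ_castSucc i ▸ hmem _
    refine linearIndependent_finSnoc.2
      ⟨ih (hF.comp Fin.strictMono_castSucc.monotone) hmem' (fun i => hnotMem i.castSucc), ?_⟩
    have hspan : span K (Set.range (Fin.init x)) ≤ F (Fin.last p).castSucc :=
      span_le.2 <| Set.range_subset_iff.2 fun i =>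
        hF (Fin.castSucc_le_castSucc_iff.2 (Fin.le_last _)) (hmem' i)
    exact fun h => hnotMem (Fin.last p) (hspan h)

theorem linearIndependent_mkQ_of_mem_succ_of_notMem_castSucc {p : ℕ}
    {F : Fin (p + 1) → Submodule K V} (hF : Monotone F) {x : Fin p → V}
    (hmem : ∀ i, x i ∈ F i.succ) (hnotMem : ∀ i, x i ∉ F i.castSucc) :
    LinearIndependent K ((F 0).mkQ ∘ x) := by
  refine linearIndependent_of_mem_succ_of_notMem_castSucc (F := fun i => (F i).map (F 0).mkQ)
    (fun i j hij => map_mono (hF hij)) (fun i => mem_map_of_mem (hmem i)) fun i h => hnotMem i ?_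
  rwa [Function.comp_apply, ← mem_comap, comap_map_mkQ, sup_eq_right.2 (hF (Fin.zero_le _))] at h

end Flag

/-- for a strictly increasing chain `σ₀ < σ₁ < ⋯ < σ_p` of cones of a
rational fan, with `v_{σ_i} ∈ N` an interior point of `σ_i`, the images of
`v_{σ₁}, …, v_{σ_p}` under the quotient map `π_{σ₀} : ℝⁿ → ℝⁿ/span(σ₀)` are linearly
independent. -/
theorem chain_interiorPoints_linearIndependent (n p : ℕ)
    (σ : Fin (p + 1) → Set (Fin n → ℝ))
    (hpoly : ∀ i, IsRatCone (σ i))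
    (hchain : ∀ i : Fin p, IsFaceOf (σ i.castSucc) (σ i.succ) ∧ σ i.castSucc ≠ σ i.succ)
    (v : Fin (p + 1) → Fin n → ℤ)
    (hv : ∀ i, (fun j => (v i j : ℝ)) ∈ intrinsicInterior ℝ (σ i)) :
    LinearIndependent ℝ
      (fun i : Fin p => (Submodule.span ℝ (σ 0)).mkQ (fun j => (v i.succ j : ℝ))) := by
  let C i := (hpoly i).toPointedCone
  have hface (i : Fin p) : (C i.castSucc).IsFaceOf (C i.succ) := (hchain i).1.pointedCone_isFaceOf
  have hvC (i : Fin (p + 1)) : (fun j => (v i j : ℝ)) ∈ C i := intrinsicInterior_subset (hv i)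
  refine linearIndependent_mkQ_of_mem_succ_of_notMem_castSucc
    (F := fun i => span ℝ (σ i)) (Fin.monotone_iff_le_succ.2 fun i => span_mono (hchain i).1.1)
    (fun i => subset_span (hvC i.succ)) fun i hspan => (hchain i).2 ?_
  exact congrArg SetLike.coe <| (hface i).eq_of_mem_intrinsicInterior (hv i.succ)
    ((hface i).mem_of_mem_span (hvC i.succ) hspan)
end

section
/- Let σ₀ < σ₁ < ⋯ < σ_p be a strictly ascending chain of cones in a rational fan Σ, with interior points v_{σ_i} ∈ N chosen in the relative interior of each σ_i. Define φ : [0,1]^p → Hom(σ_p^∨ ∩ M, ℝ₊) by φ(t)(m) = (∏_{i=1}^p t_i^{⟨m, v_{σ_i}⟩}) · x_{σ₀}(m), with the convention 0⁰ = 1. Then φ is well-defined (all exponents ⟨m, v_{σ_i}⟩ are nonnegative for m ∈ σ_p^∨) and continuous, φ(t) = x_{σ_p} whenever t_p = 0, and φ(t) ≠ φ(t') whenever t_p ≠ t'_p. -/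
/-!
The only nontrivial point is injectivity in `t_p`. By the face property, an integral `m ≥ 0` on
`σ_p` vanishing on `σ_{p-1}` also vanishes on every earlier cone, so `φ(t)(m) = t_p ^ ⟨m, v_{σ_p}⟩`;
the exponent is positive as soon as `m` does not vanish on `σ_p`, because `v_{σ_p}` is a relative
interior point. Such an `m` exists for any proper face `F` of a rational cone `σ`: a relative
interior point of `F` gives `σ ∩ span F = F`, so `0` can be separated from the closed convex set
`conv (generators outside F) + span F`; the real separating functional solves a system of integral
linear equations and strict inequalities, and rational solutions are dense among the real ones.
-/

open Set Topology Pointwise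

section IntrinsicInterior

variable {E : Type*} [NormedAddCommGroup E] [NormedSpace ℝ E] {S : Set E} {v w : E}

theorem exists_add_smul_sub_mem_of_mem_intrinsicInterior_s4 (hv : v ∈ intrinsicInterior ℝ S)
    (hw : w ∈ affineSpan ℝ S) : ∃ ε : ℝ, 0 < ε ∧ v + ε • (v - w) ∈ S := by
  obtain ⟨y, hy, rfl⟩ := mem_intrinsicInterior.1 hv
  let c : ℝ → affineSpan ℝ S := fun ε =>
    ⟨y + ε • ((y : E) - w), by
      simpa [vsub_eq_sub, vadd_eq_add, add_comm] using
        (affineSpan ℝ S).smul_vsub_vadd_mem ε y.2 hw y.2⟩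
  have hc : Continuous c := by fun_prop
  have hev : ∀ᶠ ε in 𝓝[>] (0 : ℝ), c ε ∈ interior ((↑) ⁻¹' S) :=
    nhdsWithin_le_nhds <| hc.continuousAt.preimage_mem_nhds <|
      isOpen_interior.mem_nhds (by simpa [c] using hy)
  obtain ⟨ε, hε, hεS⟩ := (hev.and self_mem_nhdsWithin).exists
  exact ⟨ε, hεS, (interior_subset hε : c ε ∈ ((↑) ⁻¹' S : Set (affineSpan ℝ S)))⟩

theorem pos_of_mem_intrinsicInterior (f : E →ₗ[ℝ] ℝ) (hf : ∀ x ∈ S, 0 ≤ f x)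
    (hv : v ∈ intrinsicInterior ℝ S) (hw : w ∈ S) (hfw : 0 < f w) : 0 < f v := by
  obtain ⟨ε, hε, hmem⟩ :=
    exists_add_smul_sub_mem_of_mem_intrinsicInterior_s4 hv (subset_affineSpan ℝ S hw)
  have := hf _ hmem
  simp only [map_add, map_smul, map_sub, smul_eq_mul] at this
  nlinarith [hf v (intrinsicInterior_subset hv)]

end IntrinsicInterior

section Face

variable {E : Type*} [NormedAddCommGroup E] [NormedSpace ℝ E] {σ F : Set E} {v x : E}

theorem IsFaceOf.isExtreme (hF : IsFaceOf F σ) : IsExtreme ℝ σ F := by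
  refine ⟨hF.1, fun x hx y hy z hz ⟨a, b, ha, hb, hab, hxyz⟩ => ?_⟩
  obtain rfl : b = 1 - a := by linarith
  exact (hF.2.2 x hx y hy a ha (by linarith) (hxyz ▸ hz)).1

theorem IsFaceOf.zero_mem (hF : IsFaceOf F σ) (hσ : ∀ c : ℝ, 0 ≤ c → ∀ x ∈ σ, c • x ∈ σ)
    (hv : v ∈ F) : (0 : E) ∈ F :=
  hF.isExtreme.right_mem_of_mem_openSegment (hσ 2 zero_le_two v (hF.1 hv))
    (by simpa using hσ 0 le_rfl v (hF.1 hv)) hv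
    ⟨1 / 2, 1 / 2, by norm_num, by norm_num, by norm_num, by simp [smul_smul]⟩

theorem IsFaceOf.mem_of_mem_span (hF : IsFaceOf F σ)
    (hσ : ∀ c : ℝ, 0 ≤ c → ∀ x ∈ σ, c • x ∈ σ) (hv : v ∈ intrinsicInterior ℝ F) (hx : x ∈ σ)
    (hxF : x ∈ Submodule.span ℝ F) : x ∈ F := by
  have h0 := hF.zero_mem hσ (intrinsicInterior_subset hv)
  have hxA : x ∈ affineSpan ℝ F := by
    have hxV : x ∈ (affineSpan ℝ F).direction := by
      rw [direction_affineSpan, vectorSpan_eq_span_vsub_set_right ℝ h0]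
      simpa using hxF
    simpa using AffineSubspace.vadd_mem_of_mem_direction hxV (subset_affineSpan ℝ F h0)
  obtain ⟨ε, hε, hu⟩ := exists_add_smul_sub_mem_of_mem_intrinsicInterior_s4 hv hxA
  refine hF.isExtreme.2 hx (hF.1 hu) (intrinsicInterior_subset hv)
    ⟨ε / (1 + ε), 1 / (1 + ε), by positivity, by positivity, by field_simp; ring, ?_⟩
  match_scalars <;> field_simp
  ring

theorem IsFaceOf.exists_eq_zero_and_pos [FiniteDimensional ℝ E] (hF : IsFaceOf F σ)
    (hσc : Convex ℝ σ) (hσ : ∀ c : ℝ, 0 ≤ c → ∀ x ∈ σ, c • x ∈ σ)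
    (hv : v ∈ intrinsicInterior ℝ F) (T : Finset E) (hT : ↑T ⊆ σ \ F) :
    ∃ f : E →L[ℝ] ℝ, (∀ x ∈ F, f x = 0) ∧ ∀ x ∈ T, 0 < f x := by
  rcases T.eq_empty_or_nonempty with rfl | ⟨g, hg⟩
  · exact ⟨0, by simp, by simp⟩
  set V := Submodule.span ℝ F
  have hhull : convexHull ℝ (T : Set E) ⊆ σ \ F := convexHull_min hT (hF.isExtreme.convex_sdiff hσc)
  have h0 : (0 : E) ∉ convexHull ℝ (T : Set E) + (V : Set E) := by
    rintro ⟨a, ha, b, hb, hab⟩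
    refine (hhull ha).2 (hF.mem_of_mem_span hσ hv (hhull ha).1 ?_)
    rw [eq_neg_of_add_eq_zero_left hab]
    exact V.neg_mem hb
  obtain ⟨f, u, hf0, hfD⟩ := geometric_hahn_banach_point_closed
    ((convex_convexHull ℝ _).add V.convex)
    (V.closed_of_finiteDimensional.add_left_of_isCompact (T.finite_toSet.isCompact_convexHull ℝ)) h0
  have hu : 0 < u := by simpa using hf0
  refine ⟨f, fun x hx => ?_, fun x hx => ?_⟩
  · by_contra hfx
    have := hfD (g + ((u - f g) / f x) • x) (add_mem_add (subset_convexHull ℝ _ hg)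
      (V.smul_mem _ (Submodule.subset_span hx)))
    rw [map_add, map_smul, smul_eq_mul, div_mul_cancel₀ _ hfx] at this
    linarith
  · have := hfD x (by simpa using add_mem_add (subset_convexHull ℝ _ hx) V.zero_mem)
    linarith

end Face

section RationalPoints

variable {n : ℕ}

theorem ratCast_dotProduct_intCast (q : Fin n → ℚ) (e : Fin n → ℤ) :
    (Rat.cast ∘ q : Fin n → ℝ) ⬝ᵥ (Int.cast ∘ e) = ((q ⬝ᵥ (Int.cast ∘ e) : ℚ) : ℝ) := by
  simp [dotProduct]

theorem mem_closure_ratCast_of_dotProduct_eq_zero (E : Finset (Fin n → ℤ)) {y : Fin n → ℝ}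
    (hy : ∀ e ∈ E, y ⬝ᵥ (Int.cast ∘ e) = 0) :
    y ∈ closure ((Rat.cast ∘ ·) '' {q : Fin n → ℚ | ∀ e ∈ E, q ⬝ᵥ (Int.cast ∘ e) = 0}) := by
  classical
  induction E using Finset.induction_on generalizing y with
  | empty =>
    have hdense : DenseRange (Rat.cast ∘ · : (Fin n → ℚ) → Fin n → ℝ) :=
      DenseRange.piMap fun _ => Rat.denseRange_cast
    simpa [image_univ] using hdense y
  | insert g E hg ih =>
    set S := {q : Fin n → ℚ | ∀ e ∈ E, q ⬝ᵥ (Int.cast ∘ e) = 0}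
    have hyE := ih fun e he => hy e (Finset.mem_insert_of_mem he)
    by_cases h : ∀ q ∈ S, q ⬝ᵥ (Int.cast ∘ g) = 0
    · refine closure_mono (image_mono fun q hq e he => ?_) hyE
      rcases Finset.mem_insert.1 he with rfl | he
      exacts [h q hq, hq e he]
    push Not at h
    obtain ⟨q₀, hq₀, hq₀g⟩ := h
    -- projection along `q₀` onto `g⊥`; it maps rational solutions of `E` to those of `insert g E`
    let π : (Fin n → ℝ) → Fin n → ℝ := fun z =>
      z - ((z ⬝ᵥ (Int.cast ∘ g)) / ((Rat.cast ∘ q₀ : Fin n → ℝ) ⬝ᵥ (Int.cast ∘ g))) •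
        (Rat.cast ∘ q₀)
    have hπ : Continuous π := by fun_prop
    have hπy : π y = y := by simp [π, hy g (Finset.mem_insert_self g E)]
    have hπS : π '' ((Rat.cast ∘ ·) '' S) ⊆
        (Rat.cast ∘ ·) '' {q : Fin n → ℚ | ∀ e ∈ insert g E, q ⬝ᵥ (Int.cast ∘ e) = 0} := by
      rintro - ⟨-, ⟨q, hq, rfl⟩, rfl⟩
      refine ⟨q - ((q ⬝ᵥ (Int.cast ∘ g)) / (q₀ ⬝ᵥ (Int.cast ∘ g))) • q₀, fun e he => ?_, ?_⟩
      · rw [sub_dotProduct, smul_dotProduct, smul_eq_mul]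
        rcases Finset.mem_insert.1 he with rfl | he
        · rw [div_mul_cancel₀ _ hq₀g, sub_self]
        · rw [hq e he, hq₀ e he, mul_zero, sub_zero]
      · ext j
        simp [π, ratCast_dotProduct_intCast]
    simpa [hπy] using closure_mono hπS (image_closure_subset_closure_image hπ ⟨y, hyE, rfl⟩)

theorem exists_nat_mul_eq_intCast (q : Fin n → ℚ) :
    ∃ N : ℕ, 0 < N ∧ ∃ m : Fin n → ℤ, ∀ j, (m j : ℚ) = N * q j := by
  refine ⟨∏ j, (q j).den, Finset.prod_pos fun j _ => (q j).pos,
    fun j => (q j).num * ((∏ i, (q i).den) / (q j).den : ℕ), fun j => ?_⟩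
  have hdvd : (q j).den ∣ ∏ i, (q i).den := Finset.dvd_prod_of_mem _ (Finset.mem_univ j)
  rw [Int.cast_mul, Int.cast_natCast, Nat.cast_div hdvd (by simp), ← Rat.mul_den_eq_num]
  field_simp

theorem exists_int_dotProduct_eq_zero_and_pos (E P : Finset (Fin n → ℤ)) {y : Fin n → ℝ}
    (hE : ∀ e ∈ E, y ⬝ᵥ (Int.cast ∘ e) = 0) (hP : ∀ g ∈ P, 0 < y ⬝ᵥ (Int.cast ∘ g)) :
    ∃ m : Fin n → ℤ, (∀ e ∈ E, m ⬝ᵥ e = 0) ∧ ∀ g ∈ P, 0 < m ⬝ᵥ g := by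
  have hU : IsOpen {z : Fin n → ℝ | ∀ g ∈ P, 0 < z ⬝ᵥ (Int.cast ∘ g)} := by
    simp only [ofPred_forall]
    exact isOpen_biInter_finset fun g _ => isOpen_lt continuous_const (by fun_prop)
  obtain ⟨z, hzP, q, hqE, rfl⟩ :=
    mem_closure_iff.1 (mem_closure_ratCast_of_dotProduct_eq_zero E hE) _ hU hP
  obtain ⟨N, hN, m, hm⟩ := exists_nat_mul_eq_intCast q
  have hcast (e : Fin n → ℤ) : ((m ⬝ᵥ e : ℤ) : ℚ) = N * (q ⬝ᵥ (Int.cast ∘ e)) := by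
    simp [dotProduct, hm, Finset.mul_sum, mul_assoc]
  refine ⟨m, fun e he => ?_, fun g hg => ?_⟩
  · have := hcast e
    rw [hqE e he, mul_zero] at this
    exact_mod_cast this
  · have hqg : (0 : ℚ) < q ⬝ᵥ (Int.cast ∘ g) := by
      exact_mod_cast ratCast_dotProduct_intCast q g ▸ hzP g hg
    exact_mod_cast (hcast g).symm ▸ mul_pos (Nat.cast_pos.2 hN) hqg

end RationalPoints

section IntCone

variable {n : ℕ} {s : Finset (Fin n → ℤ)} {F : Set (Fin n → ℝ)}

def intCone (s : Finset (Fin n → ℤ)) : Set (Fin n → ℝ) :=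
  {x | ∃ c : (Fin n → ℤ) → ℝ, (∀ g, 0 ≤ c g) ∧ x = ∑ g ∈ s, c g • (Int.cast ∘ g)}

theorem isRatCone_iff {σ : Set (Fin n → ℝ)} : IsRatCone σ ↔ ∃ s, σ = intCone s := Iff.rfl

theorem intCast_mem_intCone {g : Fin n → ℤ} (hg : g ∈ s) :
    (Int.cast ∘ g : Fin n → ℝ) ∈ intCone s := by
  classical
  refine ⟨Pi.single g 1, fun g' => by by_cases h : g' = g <;> simp [h], ?_⟩
  rw [Finset.sum_eq_single_of_mem g hg fun b _ hb => by simp [hb], Pi.single_eq_same, one_smul]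

theorem smul_mem_intCone {c : ℝ} (hc : 0 ≤ c) {x : Fin n → ℝ} (hx : x ∈ intCone s) :
    c • x ∈ intCone s := by
  obtain ⟨a, ha, rfl⟩ := hx
  exact ⟨fun g => c * a g, fun g => mul_nonneg hc (ha g), by simp [Finset.smul_sum, smul_smul]⟩

theorem convex_intCone (s : Finset (Fin n → ℤ)) : Convex ℝ (intCone s) := by
  rintro - ⟨a, ha, rfl⟩ - ⟨b, hb, rfl⟩ t u ht hu -
  exact ⟨fun g => t * a g + u * b g, fun g => add_nonneg (mul_nonneg ht (ha g))
    (mul_nonneg hu (hb g)), by simp [Finset.smul_sum, smul_smul, add_smul, Finset.sum_add_distrib]⟩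

theorem intCone_subset_submodule {W : Submodule ℝ (Fin n → ℝ)}
    (hW : ∀ g ∈ s, (Int.cast ∘ g : Fin n → ℝ) ∈ W) : intCone s ⊆ W := by
  rintro - ⟨c, -, rfl⟩
  exact W.sum_mem fun g hg => W.smul_mem _ (hW g hg)

theorem dotProduct_nonneg_of_mem_intCone {u x : Fin n → ℝ}
    (hu : ∀ g ∈ s, 0 ≤ u ⬝ᵥ (Int.cast ∘ g)) (hx : x ∈ intCone s) : 0 ≤ u ⬝ᵥ x := by
  obtain ⟨c, hc, rfl⟩ := hx
  rw [dotProduct_sum]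
  exact Finset.sum_nonneg fun g hg => by rw [dotProduct_smul]; exact mul_nonneg (hc g) (hu g hg)

theorem IsFaceOf.exists_intCast_not_mem (hF : IsFaceOf F (intCone s)) {v : Fin n → ℝ}
    (hv : v ∈ intrinsicInterior ℝ F) (hne : F ≠ intCone s) :
    ∃ g ∈ s, (Int.cast ∘ g : Fin n → ℝ) ∉ F := by
  by_contra! hs
  refine hne (hF.1.antisymm fun w hw => ?_)
  exact hF.mem_of_mem_span (fun c hc x hx => smul_mem_intCone hc hx) hv hw
    (intCone_subset_submodule (fun g hg => Submodule.subset_span (hs g hg)) hw)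

theorem intCast_dotProduct (m e : Fin n → ℤ) :
    ((m ⬝ᵥ e : ℤ) : ℝ) = (Int.cast ∘ m : Fin n → ℝ) ⬝ᵥ (Int.cast ∘ e) := by
  simpa using (Int.castRingHom ℝ).map_dotProduct m e

theorem IsRatCone.exists_int_dual {σ : Set (Fin n → ℝ)} (hσ : IsRatCone σ) (hF : IsFaceOf F σ)
    {v : Fin n → ℤ} (hv : (Int.cast ∘ v : Fin n → ℝ) ∈ intrinsicInterior ℝ F) (hne : F ≠ σ) :
    ∃ m : Fin n → ℤ, (∀ w ∈ σ, 0 ≤ (Int.cast ∘ m : Fin n → ℝ) ⬝ᵥ w) ∧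
      (∀ w ∈ F, (Int.cast ∘ m : Fin n → ℝ) ⬝ᵥ w = 0) ∧
      ∃ w ∈ σ, 0 < (Int.cast ∘ m : Fin n → ℝ) ⬝ᵥ w := by
  classical
  obtain ⟨s, rfl⟩ := isRatCone_iff.1 hσ
  set T := s.filter fun g => (Int.cast ∘ g : Fin n → ℝ) ∉ F
  obtain ⟨f, hfF, hfT⟩ := hF.exists_eq_zero_and_pos (convex_intCone s)
    (fun c hc x hx => smul_mem_intCone hc hx) hv (T.image (Int.cast ∘ ·)) (by
      simp only [Finset.coe_image, Set.image_subset_iff]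
      exact fun g hg => (Finset.mem_filter.1 hg).imp_left intCast_mem_intCone)
  -- vanishing at the relative interior point `v` will force `m` to vanish on all of `F`
  obtain ⟨m, hmE, hmT⟩ := exists_int_dotProduct_eq_zero_and_pos
    (insert v (s.filter fun g => (Int.cast ∘ g : Fin n → ℝ) ∈ F)) T
    (y := (dotProductEquiv ℝ (Fin n)).symm f.toLinearMap)
    (fun e he => by
      rw [← dotProductEquiv_apply_apply, LinearEquiv.apply_symm_apply]
      rcases Finset.mem_insert.1 he with rfl | he
      exacts [hfF _ (intrinsicInterior_subset hv), hfF _ (Finset.mem_filter.1 he).2])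
    (fun g hg => by
      rw [← dotProductEquiv_apply_apply, LinearEquiv.apply_symm_apply]
      exact hfT _ (Finset.mem_image_of_mem _ hg))
  have hmσ : ∀ w ∈ intCone s, 0 ≤ (Int.cast ∘ m : Fin n → ℝ) ⬝ᵥ w :=
    fun w => dotProduct_nonneg_of_mem_intCone fun g hg => by
      rw [← intCast_dotProduct]
      by_cases hgF : (Int.cast ∘ g : Fin n → ℝ) ∈ F
      · rw [hmE g (Finset.mem_insert_of_mem (Finset.mem_filter.2 ⟨hg, hgF⟩)), Int.cast_zero]
      · exact_mod_cast (hmT g (Finset.mem_filter.2 ⟨hg, hgF⟩)).le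
  refine ⟨m, hmσ, fun w hw => ?_, ?_⟩
  · by_contra h
    have := pos_of_mem_intrinsicInterior (dotProductEquiv ℝ (Fin n) (Int.cast ∘ m))
      (fun x hx => hmσ x (hF.1 hx)) hv hw ((hmσ w (hF.1 hw)).lt_of_ne' h)
    simp [← intCast_dotProduct, hmE v (Finset.mem_insert_self _ _)] at this
  · obtain ⟨g, hg, hgF⟩ := hF.exists_intCast_not_mem hv hne
    refine ⟨_, intCast_mem_intCone hg, ?_⟩
    rw [← intCast_dotProduct]
    exact_mod_cast hmT g (Finset.mem_filter.2 ⟨hg, hgF⟩)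

end IntCone

/-- for a strictly ascending chain `σ₀ < ⋯ < σ_p` (`p ≥ 1`) of cones of a
rational fan with interior lattice points `v_{σ_i}`, the map
`φ(t)(m) = (∏_{i=1}^p t_i^⟨m,v_{σ_i}⟩) · x_{σ₀}(m)` (real powers, with `0⁰ = 1`):
(a) has all exponents `⟨m, v_{σ_i}⟩ ≥ 0` for `m ∈ σ_p^∨` (well-definedness);
(b) is continuous in `t ∈ [0,1]^p` for each `m ∈ σ_p^∨ ∩ M`;
(c) equals the distinguished point `x_{σ_p}` whenever `t_p = 0`;
(d) takes different values on `σ_p^∨ ∩ M` whenever `t_p ≠ t'_p`. -/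
theorem phi_chain_properties (n p : ℕ) (hp : 1 ≤ p)
    (σ : Fin (p + 1) → Set (Fin n → ℝ))
    (hpoly : ∀ i, IsRatCone (σ i))
    (hchain : ∀ i : Fin p, IsFaceOf (σ i.castSucc) (σ i.succ) ∧ σ i.castSucc ≠ σ i.succ)
    (v : Fin (p + 1) → Fin n → ℤ)
    (hv : ∀ i, (fun j => (v i j : ℝ)) ∈ intrinsicInterior ℝ (σ i))
    (x : (Fin n → ℤ) → ℝ)
    (hx : ∀ m : Fin n → ℤ,
      ((∀ w ∈ σ 0, ∑ j, (m j : ℝ) * w j = 0) → x m = 1) ∧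
      ((¬ ∀ w ∈ σ 0, ∑ j, (m j : ℝ) * w j = 0) → x m = 0))
    (φ : (Fin p → ℝ) → (Fin n → ℤ) → ℝ)
    (hφ : ∀ t m, φ t m =
      (∏ i : Fin p, (t i) ^ (∑ j, (m j : ℝ) * (v i.succ j))) * x m) :
    (∀ m : Fin n → ℤ, (∀ w ∈ σ (Fin.last p), 0 ≤ ∑ j, (m j : ℝ) * w j) →
      ∀ i : Fin p, 0 ≤ ∑ j, (m j : ℝ) * (v i.succ j)) ∧
    (∀ m : Fin n → ℤ, (∀ w ∈ σ (Fin.last p), 0 ≤ ∑ j, (m j : ℝ) * w j) →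
      ContinuousOn (fun t => φ t m) {t : Fin p → ℝ | ∀ i, t i ∈ Set.Icc (0 : ℝ) 1}) ∧
    (∀ t : Fin p → ℝ, (∀ i, t i ∈ Set.Icc (0 : ℝ) 1) →
      t ⟨p - 1, by omega⟩ = 0 →
      ∀ m : Fin n → ℤ, (∀ w ∈ σ (Fin.last p), 0 ≤ ∑ j, (m j : ℝ) * w j) →
        (((∀ w ∈ σ (Fin.last p), ∑ j, (m j : ℝ) * w j = 0) → φ t m = 1) ∧
         ((¬ ∀ w ∈ σ (Fin.last p), ∑ j, (m j : ℝ) * w j = 0) → φ t m = 0))) ∧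
    (∀ t t' : Fin p → ℝ, (∀ i, t i ∈ Set.Icc (0 : ℝ) 1) →
      (∀ i, t' i ∈ Set.Icc (0 : ℝ) 1) →
      t ⟨p - 1, by omega⟩ ≠ t' ⟨p - 1, by omega⟩ →
      ∃ m : Fin n → ℤ, (∀ w ∈ σ (Fin.last p), 0 ≤ ∑ j, (m j : ℝ) * w j) ∧
        φ t m ≠ φ t' m) := by
  have hmono : Monotone σ := Fin.monotone_iff_le_succ.2 fun i => (hchain i).1.1
  have hvσ (i) : (fun j => (v i j : ℝ)) ∈ σ i := intrinsicInterior_subset (hv i)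
  have hexp (m : Fin n → ℤ) (hm : ∀ w ∈ σ (Fin.last p), 0 ≤ ∑ j, (m j : ℝ) * w j) (i : Fin p) :
      0 ≤ ∑ j, (m j : ℝ) * v i.succ j :=
    hm _ (hmono (Fin.le_last _) (hvσ _))
  have hlast (m : Fin n → ℤ) (hm : ∀ w ∈ σ (Fin.last p), 0 ≤ ∑ j, (m j : ℝ) * w j)
      (hpos : ∃ w ∈ σ (Fin.last p), 0 < ∑ j, (m j : ℝ) * w j) :
      0 < ∑ j, (m j : ℝ) * v (Fin.last p) j :=
    let ⟨_, hw, hw0⟩ := hpos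
    pos_of_mem_intrinsicInterior (dotProductEquiv ℝ (Fin n) (Int.cast ∘ m)) hm (hv _) hw hw0
  set iF : Fin p := ⟨p - 1, by omega⟩
  have hiF : iF.succ = Fin.last p := Fin.ext (by simp [iF]; omega)
  refine ⟨hexp, fun m hm => ?_, fun t _ htF m hm => ⟨fun hperp => ?_, fun hperp => ?_⟩,
    fun t t' ht ht' hne => ?_⟩
  · simp_rw [hφ]
    exact ((continuous_finsetProd _ fun i _ => (Real.continuous_rpow_const (hexp m hm i)).comp
      (continuous_apply i)).mul continuous_const).continuousOn
  · rw [hφ, (hx m).1 fun w hw => hperp w (hmono (Fin.zero_le _) hw), mul_one]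
    exact Finset.prod_eq_one fun i _ => by
      rw [hperp _ (hmono (Fin.le_last _) (hvσ _)), Real.rpow_zero]
  · rw [hφ]
    by_cases h0 : ∀ w ∈ σ 0, ∑ j, (m j : ℝ) * w j = 0
    · push Not at hperp
      obtain ⟨w, hw, hw0⟩ := hperp
      have hpos := hlast m hm ⟨w, hw, (hm w hw).lt_of_ne' hw0⟩
      rw [Finset.prod_eq_zero (Finset.mem_univ iF) (by rw [hiF, htF, Real.zero_rpow hpos.ne']),
        zero_mul]
    · rw [(hx m).2 h0, mul_zero]
  · obtain ⟨m, hmσ, hmF, hmpos⟩ := (hpoly (Fin.last p)).exists_int_dual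
      (hiF ▸ (hchain iF).1) (v := v iF.castSucc) (hv _) (hiF ▸ (hchain iF).2)
    simp only [dotProduct, Function.comp_apply] at hmσ hmF hmpos
    have hφm (s : Fin p → ℝ) : φ s m = s iF ^ ∑ j, (m j : ℝ) * v (Fin.last p) j := by
      rw [hφ, (hx m).1 fun w hw => hmF w (hmono (Fin.zero_le _) hw), mul_one,
        Finset.prod_eq_single iF (fun i _ hi => ?_) (by simp), hiF]
      have hi' : i.succ ≤ iF.castSucc :=
        Fin.succ_le_castSucc_iff.2 ((Fin.le_iff_val_le_val.2 (by simp [iF]; omega)).lt_of_ne hi)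
      rw [hmF _ (hmono hi' (hvσ _)), Real.rpow_zero]
    refine ⟨m, hmσ, fun h => hne ?_⟩
    rw [hφm, hφm] at h
    exact Real.rpow_left_injOn (hlast m hmσ hmpos).ne' (ht iF).1 (ht' iF).1 h
end
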